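/- Let x ∈ S^{d-1}, t ∈ (0,1], and suppose f: S^{d-1} → R is bounded and satisfies |f(y) − f(x)| ≤ M d(x,y)^t for all y with d(x,y) ≤ δ. Let A_j(x,y) be a kernel with ∫_{S^{d-1}} A_j(x,y) dy = 1 and |A_j(x,y)| ≤ c_m 2^{j(d-1)}/(1 + 2^j d(x,y))^m for every m (with constants c_m). Then there exists C depending on M, δ, d, t, ‖f‖_∞ and the constants c_m such that |∫ A_j(x,y) f(y) dy − f(x)| ≤ C 2^{-jt} for all j. -/

import Mathlib

/-!
Since `∫ A_j(x, ·) = 1`, the bias is `∫ A_j(x, y) (f y - f x) dy`. Boundedness of `f` turns the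
local Hölder bound into `|f y - f x| ≤ L d(x, y) ^ t` on the whole sphere, and for `t ≤ 1`,
`d ^ t ≤ 2 ^ (-j t) (1 + 2 ^ j d)`; with `m = d + 1` the integrand is therefore at most
`c L 2 ^ (-j t) · 2 ^ (j (d - 1)) / (1 + 2 ^ j d) ^ d`. This weight has integral bounded
uniformly in `j`: on the dyadic piece where `1 + 2 ^ j d(x, y) ≈ 2 ^ k` it is
`≈ 2 ^ (j (d - 1) - k d)`, and the piece lies in a cap of radius `2 ^ (k + 1 - j)`, of measure
`O(2 ^ ((k + 1 - j) (d - 1)))`. That cap estimate comes from the cone over a cap of chordal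
radius `r`: the part of it between the radii `1 - r` and `1` carries at least the fraction `r`
of its volume and lies in a ball of radius `2 r`.
-/

open MeasureTheory Metric

/-- The surface measure on the unit sphere `S^{d-1} ⊂ ℝ^d` (total mass `ω_{d-1}`). -/
noncomputable def sphereMeasure (d : ℕ) :
    Measure (sphere (0 : EuclideanSpace ℝ (Fin d)) 1) :=
  (volume : Measure (EuclideanSpace ℝ (Fin d))).toSphere

/-- The geodesic distance `d(x,y) = arccos (x ⬝ y)` on the unit sphere. -/
noncomputable def geodesicDist {d : ℕ} (x y : sphere (0 : EuclideanSpace ℝ (Fin d)) 1) : ℝ :=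
  Real.arccos (inner (𝕜 := ℝ) (x : EuclideanSpace ℝ (Fin d)) (y : EuclideanSpace ℝ (Fin d)))

open Set Pointwise Module

section Cone

variable {E : Type*} [NormedAddCommGroup E] [NormedSpace ℝ E]

theorem Ioo_smul_sphere_subset_ball (a : ℝ) (s : Set (sphere (0 : E) 1)) :
    Ioo (0 : ℝ) a • ((↑) '' s : Set E) ⊆ ball 0 a := by
  rintro _ ⟨b, hb, _, ⟨y, -, rfl⟩, rfl⟩
  simp [norm_smul, abs_of_pos hb.1, hb.2]

theorem Ioo_smul_closedBall_subset (x : sphere (0 : E) 1) (r : ℝ) :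
    Ioo (0 : ℝ) 1 • ((↑) '' closedBall x r : Set E) ⊆
      Ioo 0 (1 - r) • ((↑) '' closedBall x r) ∪ closedBall (x : E) (2 * r) := by
  rintro _ ⟨a, ⟨ha0, ha1⟩, _, ⟨y, hy, rfl⟩, rfl⟩
  rcases lt_or_ge a (1 - r) with har | har
  · exact .inl (smul_mem_smul ⟨ha0, har⟩ (mem_image_of_mem _ hy))
  · refine .inr (mem_closedBall_iff_norm.2 ?_)
    have hyx : ‖(y : E) - x‖ ≤ r := by rwa [mem_closedBall, Subtype.dist_eq, dist_eq_norm] at hy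
    calc ‖a • (y : E) - x‖ = ‖a • ((y : E) - x) - (1 - a) • (x : E)‖ := by
          congr 1; simp only [smul_sub, sub_smul, one_smul]; abel
      _ ≤ a * ‖(y : E) - x‖ + (1 - a) * 1 := by
          refine (norm_sub_le _ _).trans_eq ?_
          rw [norm_smul, norm_smul, Real.norm_of_nonneg ha0.le,
            Real.norm_of_nonneg (sub_nonneg.2 ha1.le), norm_eq_of_mem_sphere x]
      _ ≤ 2 * r := by nlinarith [mul_le_mul_of_nonneg_left hyx ha0.le]

end Cone

namespace MeasureTheory.Measure

variable {E : Type*} [NormedAddCommGroup E] [NormedSpace ℝ E] [FiniteDimensional ℝ E]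
  [MeasurableSpace E] (μ : Measure E) [μ.IsAddHaarMeasure]

theorem addHaar_Ioo_smul_sphere_ne_top (a : ℝ) (s : Set (sphere (0 : E) 1)) :
    μ (Ioo (0 : ℝ) a • ((↑) '' s : Set E)) ≠ ⊤ :=
  ((measure_mono (Ioo_smul_sphere_subset_ball a s)).trans_lt measure_ball_lt_top).ne

variable [BorelSpace E]

theorem addHaar_real_Ioo_smul {a : ℝ} (ha : 0 < a) (s : Set E) :
    μ.real (Ioo 0 a • s) = a ^ finrank ℝ E * μ.real (Ioo (0 : ℝ) 1 • s) := by
  have : Ioo (0 : ℝ) a = a • Ioo 0 1 := by simp [LinearOrderedField.smul_Ioo ha]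
  rw [this, smul_assoc, measureReal_def, addHaar_smul_of_nonneg μ ha.le, ENNReal.toReal_mul,
    ENNReal.toReal_ofReal (by positivity), measureReal_def]

theorem toSphere_closedBall_le (x : sphere (0 : E) 1) {r : ℝ} (hr : 0 < r) :
    μ.toSphere (closedBall x r) ≤ ENNReal.ofReal
      (finrank ℝ E * 2 ^ finrank ℝ E * μ.real (ball 0 1) * r ^ (finrank ℝ E - 1)) := by
  have : Nontrivial E := nontrivial_of_ne (x : E) 0 (ne_zero_of_mem_unit_sphere x)
  have hn : finrank ℝ E ≠ 0 := finrank_pos.ne'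
  set n := finrank ℝ E
  set V := μ.real (ball 0 1)
  set C : Set E := (↑) '' closedBall x r
  rw [toSphere_apply' μ measurableSet_closedBall,
    ← ofReal_measureReal (addHaar_Ioo_smul_sphere_ne_top μ 1 _), ← ENNReal.ofReal_natCast,
    ← ENNReal.ofReal_mul (by positivity), mul_assoc, mul_assoc]
  set m := μ.real (Ioo (0 : ℝ) 1 • C)
  refine ENNReal.ofReal_le_ofReal (mul_le_mul_of_nonneg_left ?_ n.cast_nonneg)
  have hmV : m ≤ V := measureReal_mono (Ioo_smul_sphere_subset_ball 1 _)
  have hm0 : 0 ≤ m := measureReal_nonneg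
  rcases lt_or_ge r 1 with hr1 | hr1
  · have hcover : m ≤ (1 - r) ^ n * m + (2 * r) ^ n * V :=
      calc m ≤ μ.real (Ioo 0 (1 - r) • C ∪ closedBall (x : E) (2 * r)) :=
            measureReal_mono (Ioo_smul_closedBall_subset x r)
              (measure_union_ne_top (addHaar_Ioo_smul_sphere_ne_top μ _ _)
                measure_closedBall_lt_top.ne)
        _ ≤ _ := (measureReal_union_le _ _).trans_eq (by
            rw [addHaar_real_Ioo_smul μ (by linarith), addHaar_real_closedBall μ _ (by linarith)])
    have hpow : (1 - r) ^ n ≤ 1 - r := pow_le_of_le_one (by linarith) (by linarith) hn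
    have hr_pow : r * r ^ (n - 1) = r ^ n := mul_pow_sub_one hn r
    refine le_of_mul_le_mul_left ?_ hr
    calc r * m ≤ m - (1 - r) ^ n * m := by nlinarith [mul_le_mul_of_nonneg_right hpow hm0]
      _ ≤ (2 * r) ^ n * V := by linarith
      _ = r * (2 ^ n * (V * r ^ (n - 1))) := by rw [mul_pow, ← hr_pow]; ring
  · calc m ≤ V := hmV
      _ ≤ 2 ^ n * (V * r ^ (n - 1)) := by
        have : 1 ≤ 2 ^ n * r ^ (n - 1) := one_le_mul_of_one_le_of_one_le
          (one_le_pow₀ one_le_two) (one_le_pow₀ hr1)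
        nlinarith [measureReal_nonneg (μ := μ) (s := ball 0 1)]

end MeasureTheory.Measure

theorem norm_sub_le_arccos_inner {V : Type*} [NormedAddCommGroup V] [InnerProductSpace ℝ V]
    {u v : V} (hu : ‖u‖ = 1) (hv : ‖v‖ = 1) : ‖v - u‖ ≤ Real.arccos (inner ℝ u v) := by
  have hinner : |inner ℝ u v| ≤ 1 := by simpa [hu, hv] using abs_real_inner_le_norm u v
  have hcos : Real.cos (Real.arccos (inner ℝ u v)) = inner ℝ u v :=
    Real.cos_arccos (neg_le_of_abs_le hinner) (le_of_abs_le hinner)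
  have hchord : ‖v - u‖ ^ 2 = 2 - 2 * inner ℝ u v := by
    rw [norm_sub_sq_real, hu, hv, real_inner_comm]; ring
  refine le_of_sq_le_sq ?_ (Real.arccos_nonneg _)
  nlinarith [Real.one_sub_sq_div_two_le_cos (x := Real.arccos (inner ℝ u v))]

section Sphere

variable {d : ℕ}

instance : IsFiniteMeasure (sphereMeasure d) := by
  unfold sphereMeasure; infer_instance

theorem geodesicDist_nonneg (x y : sphere (0 : EuclideanSpace ℝ (Fin d)) 1) :
    0 ≤ geodesicDist x y :=
  Real.arccos_nonneg _

theorem geodesicDist_self (x : sphere (0 : EuclideanSpace ℝ (Fin d)) 1) : geodesicDist x x = 0 := by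
  rw [geodesicDist, real_inner_self_eq_norm_sq, norm_eq_of_mem_sphere x, one_pow, Real.arccos_one]

theorem continuous_geodesicDist (x : sphere (0 : EuclideanSpace ℝ (Fin d)) 1) :
    Continuous (geodesicDist x) :=
  Real.continuous_arccos.comp (continuous_const.inner continuous_subtype_val)

theorem dist_le_geodesicDist (x y : sphere (0 : EuclideanSpace ℝ (Fin d)) 1) :
    dist y x ≤ geodesicDist x y := by
  rw [Subtype.dist_eq, dist_eq_norm]
  exact norm_sub_le_arccos_inner (norm_eq_of_mem_sphere x) (norm_eq_of_mem_sphere y)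

theorem sphereMeasure_setOf_geodesicDist_le (x : sphere (0 : EuclideanSpace ℝ (Fin d)) 1) {r : ℝ}
    (hr : 0 < r) :
    sphereMeasure d {y | geodesicDist x y ≤ r} ≤
      ENNReal.ofReal
        (d * 2 ^ d * volume.real (ball (0 : EuclideanSpace ℝ (Fin d)) 1) * r ^ (d - 1)) := by
  refine (measure_mono fun y hy => ?_).trans
    ((volume : Measure (EuclideanSpace ℝ (Fin d))).toSphere_closedBall_le x hr |>.trans_eq ?_)
  · exact mem_closedBall.2 ((dist_le_geodesicDist x y).trans hy)
  · simp

end Sphere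

section Dyadic

variable {α : Type*} {ρ : α → ℝ} {n : ℕ} {s : ℝ}

/-- The single term with `2 ^ k ≤ 1 + s ρ y < 2 ^ (k + 1)` already dominates. -/
theorem ofReal_div_one_add_mul_pow_le_tsum (hρ : 0 ≤ ρ) (hs : 0 < s) (y : α) :
    ENNReal.ofReal (s ^ n / (1 + s * ρ y) ^ (n + 1)) ≤
      ∑' k : ℕ, {z | ρ z ≤ 2 ^ (k + 1) / s}.indicator
        (fun _ => ENNReal.ofReal (s ^ n / (2 ^ k) ^ (n + 1))) y := by
  have hsρ : 0 ≤ s * ρ y := mul_nonneg hs.le (hρ y)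
  obtain ⟨k, hk, hk'⟩ := exists_nat_pow_near (by linarith : 1 ≤ 1 + s * ρ y) one_lt_two
  have hy : ρ y ≤ 2 ^ (k + 1) / s := by
    rw [le_div_iff₀ hs]; linarith
  refine le_trans ?_ (ENNReal.le_tsum k)
  rw [Set.indicator_of_mem (show y ∈ {z | ρ z ≤ 2 ^ (k + 1) / s} from hy)]
  gcongr

theorem lintegral_ofReal_div_one_add_mul_pow_le [MeasurableSpace α] {ν : Measure α} {κ : ℝ}
    (hρm : Measurable ρ) (hρ : 0 ≤ ρ) (hκ : 0 ≤ κ)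
    (hcap : ∀ r, 0 < r → ν {y | ρ y ≤ r} ≤ ENNReal.ofReal (κ * r ^ n)) (hs : 0 < s) :
    ∫⁻ y, ENNReal.ofReal (s ^ n / (1 + s * ρ y) ^ (n + 1)) ∂ν ≤
      ENNReal.ofReal (2 ^ (n + 1) * κ) := by
  have hmeas : ∀ k : ℕ, MeasurableSet {z | ρ z ≤ 2 ^ (k + 1) / s} :=
    fun k => measurableSet_le hρm measurable_const
  have hterm : ∀ k : ℕ, ENNReal.ofReal (s ^ n / (2 ^ k) ^ (n + 1)) * ν {z | ρ z ≤ 2 ^ (k + 1) / s}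
      ≤ ENNReal.ofReal (2 ^ n * κ * (1 / 2) ^ k) := fun k =>
    calc _ ≤ ENNReal.ofReal (s ^ n / (2 ^ k) ^ (n + 1)) *
            ENNReal.ofReal (κ * (2 ^ (k + 1) / s) ^ n) := by
          gcongr; exact hcap _ (by positivity)
      _ = ENNReal.ofReal (2 ^ n * κ * (1 / 2) ^ k) := by
          rw [← ENNReal.ofReal_mul (by positivity)]
          congr 1
          rw [div_pow, one_div_pow]
          field_simp
          ring
  calc ∫⁻ y, ENNReal.ofReal (s ^ n / (1 + s * ρ y) ^ (n + 1)) ∂ν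
      ≤ ∫⁻ y, ∑' k : ℕ, {z | ρ z ≤ 2 ^ (k + 1) / s}.indicator
          (fun _ => ENNReal.ofReal (s ^ n / (2 ^ k) ^ (n + 1))) y ∂ν :=
        lintegral_mono (ofReal_div_one_add_mul_pow_le_tsum hρ hs)
    _ = ∑' k : ℕ, ENNReal.ofReal (s ^ n / (2 ^ k) ^ (n + 1)) * ν {z | ρ z ≤ 2 ^ (k + 1) / s} := by
        rw [lintegral_tsum fun k => (measurable_const.indicator (hmeas k)).aemeasurable]
        simp_rw [lintegral_indicator_const (hmeas _)]
    _ ≤ ∑' k : ℕ, ENNReal.ofReal (2 ^ n * κ * (1 / 2) ^ k) := ENNReal.tsum_le_tsum hterm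
    _ = ENNReal.ofReal (2 ^ (n + 1) * κ) := by
        rw [← ENNReal.ofReal_tsum_of_nonneg (fun k => by positivity)
          (summable_geometric_two.mul_left _), tsum_mul_left, tsum_geometric_two]
        ring_nf

end Dyadic

theorem lintegral_sphereMeasure_div_one_add_geodesicDist_le {n : ℕ}
    (x : sphere (0 : EuclideanSpace ℝ (Fin (n + 1))) 1) {s : ℝ} (hs : 0 < s) :
    ∫⁻ y, ENNReal.ofReal (s ^ n / (1 + s * geodesicDist x y) ^ (n + 1)) ∂sphereMeasure (n + 1) ≤
      ENNReal.ofReal (2 ^ (n + 1) *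
        ((n + 1) * 2 ^ (n + 1) * volume.real (ball (0 : EuclideanSpace ℝ (Fin (n + 1))) 1))) :=
  lintegral_ofReal_div_one_add_mul_pow_le (continuous_geodesicDist x).measurable
    (geodesicDist_nonneg x) (by positivity)
    (fun _ hr => by simpa using sphereMeasure_setOf_geodesicDist_le x hr) hs

theorem rpow_le_rpow_neg_mul_one_add {ρ s t : ℝ} (hρ : 0 ≤ ρ) (hs : 0 < s) (ht : 0 ≤ t)
    (ht1 : t ≤ 1) : ρ ^ t ≤ s ^ (-t) * (1 + s * ρ) := by
  have hsρ : 0 ≤ s * ρ := mul_nonneg hs.le hρ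
  calc ρ ^ t = s ^ (-t) * (s * ρ) ^ t := by
        rw [Real.mul_rpow hs.le hρ, ← mul_assoc, ← Real.rpow_add hs, neg_add_cancel,
          Real.rpow_zero, one_mul]
    _ ≤ s ^ (-t) * (1 + s * ρ) := by
        gcongr
        calc (s * ρ) ^ t ≤ (1 + s * ρ) ^ t := by gcongr; linarith
          _ ≤ (1 + s * ρ) ^ (1 : ℝ) := Real.rpow_le_rpow_of_exponent_le (by linarith) ht1
          _ = 1 + s * ρ := Real.rpow_one _

theorem abs_sub_le_mul_rpow_of_locally_holder {α : Type*} {f ρ : α → ℝ} {x y : α} {t M δ Mf : ℝ}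
    (ht : 0 ≤ t) (hδ : 0 < δ) (hfb : ∀ y, |f y| ≤ Mf) (hρ : 0 ≤ ρ y)
    (hHolder : ρ y ≤ δ → |f y - f x| ≤ M * ρ y ^ t) :
    |f y - f x| ≤ (|M| + 2 * Mf / δ ^ t) * ρ y ^ t := by
  have hMf : 0 ≤ Mf := (abs_nonneg _).trans (hfb x)
  have hδt : 0 < δ ^ t := Real.rpow_pos_of_pos hδ t
  have hρt : 0 ≤ ρ y ^ t := Real.rpow_nonneg hρ t
  rcases le_or_gt (ρ y) δ with hle | hlt
  · calc |f y - f x| ≤ M * ρ y ^ t := hHolder hle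
      _ ≤ (|M| + 2 * Mf / δ ^ t) * ρ y ^ t := by
          gcongr; exact (le_abs_self M).trans (le_add_of_nonneg_right (by positivity))
  · calc |f y - f x| ≤ 2 * Mf := (abs_sub _ _).trans (by linarith [hfb y, hfb x])
      _ = 2 * Mf / δ ^ t * δ ^ t := (div_mul_cancel₀ _ hδt.ne').symm
      _ ≤ (|M| + 2 * Mf / δ ^ t) * ρ y ^ t := by
          gcongr
          exact le_add_of_nonneg_left (abs_nonneg M)

section Kernel

variable {α : Type*} [MeasurableSpace α] {ν : Measure α}

theorem integral_mul_sub_eq_of_integral_eq_one {a f : α → ℝ} (ha : Integrable a ν)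
    (haf : Integrable (fun y => a y * f y) ν) (h1 : ∫ y, a y ∂ν = 1) (z : ℝ) :
    (∫ y, a y * f y ∂ν) - z = ∫ y, a y * (f y - z) ∂ν := by
  simp_rw [mul_sub]
  rw [integral_sub haf (ha.mul_const z), integral_mul_const, h1, one_mul]

theorem abs_integral_mul_le_of_localized {ρ a g : α → ℝ} {n : ℕ} {s t c L K : ℝ}
    (hρ : 0 ≤ ρ) (hs : 0 < s) (ht : 0 ≤ t) (ht1 : t ≤ 1) (hc : 0 ≤ c) (hL : 0 ≤ L) (hK : 0 ≤ K)
    (ha : ∀ y, |a y| ≤ c * s ^ n / (1 + s * ρ y) ^ (n + 2)) (hg : ∀ y, |g y| ≤ L * ρ y ^ t)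
    (hw : ∫⁻ y, ENNReal.ofReal (s ^ n / (1 + s * ρ y) ^ (n + 1)) ∂ν ≤ ENNReal.ofReal K) :
    |∫ y, a y * g y ∂ν| ≤ c * L * K * s ^ (-t) := by
  have hpt : ∀ y, ‖a y * g y‖ ≤ c * L * s ^ (-t) * (s ^ n / (1 + s * ρ y) ^ (n + 1)) := by
    intro y
    have h1 : 0 < 1 + s * ρ y := by linarith [mul_nonneg hs.le (hρ y)]
    calc ‖a y * g y‖ = |a y| * |g y| := abs_mul _ _
      _ ≤ c * s ^ n / (1 + s * ρ y) ^ (n + 2) * (L * (s ^ (-t) * (1 + s * ρ y))) := by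
          refine mul_le_mul (ha y) ((hg y).trans ?_) (abs_nonneg _) ((abs_nonneg _).trans (ha y))
          gcongr
          exact rpow_le_rpow_neg_mul_one_add (hρ y) hs ht ht1
      _ = c * L * s ^ (-t) * (s ^ n / (1 + s * ρ y) ^ (n + 1)) := by
          field_simp
          ring
  rw [← Real.norm_eq_abs]
  refine (norm_integral_le_lintegral_norm _).trans
    (ENNReal.toReal_le_of_le_ofReal (by positivity) ?_)
  calc ∫⁻ y, ENNReal.ofReal ‖a y * g y‖ ∂ν
      ≤ ∫⁻ y, ENNReal.ofReal (c * L * s ^ (-t)) *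
          ENNReal.ofReal (s ^ n / (1 + s * ρ y) ^ (n + 1)) ∂ν := lintegral_mono fun y => by
        rw [← ENNReal.ofReal_mul (by positivity)]; exact ENNReal.ofReal_le_ofReal (hpt y)
    _ = ENNReal.ofReal (c * L * s ^ (-t)) *
          ∫⁻ y, ENNReal.ofReal (s ^ n / (1 + s * ρ y) ^ (n + 1)) ∂ν :=
        lintegral_const_mul' _ _ ENNReal.ofReal_ne_top
    _ ≤ ENNReal.ofReal (c * L * s ^ (-t)) * ENNReal.ofReal K := by gcongr
    _ = ENNReal.ofReal (c * L * K * s ^ (-t)) := by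
        rw [← ENNReal.ofReal_mul (by positivity), mul_right_comm]

end Kernel

theorem local_bias_bound_general (d : ℕ) (t M δ Mf : ℝ)
    (ht : 0 < t) (ht1 : t ≤ 1) (hδ : 0 < δ)
    (x : sphere (0 : EuclideanSpace ℝ (Fin d)) 1)
    (f : sphere (0 : EuclideanSpace ℝ (Fin d)) 1 → ℝ)
    (hfm : Measurable f) (hfb : ∀ y, |f y| ≤ Mf)
    (hHolder : ∀ y, geodesicDist x y ≤ δ → |f y - f x| ≤ M * geodesicDist x y ^ t)
    (A : ℕ → sphere (0 : EuclideanSpace ℝ (Fin d)) 1 →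
          sphere (0 : EuclideanSpace ℝ (Fin d)) 1 → ℝ)
    (hAm : ∀ j, Measurable (A j x))
    (hA1 : ∀ j, ∫ y, A j x y ∂(sphereMeasure d) = 1)
    (c : ℕ → ℝ)
    (hloc : ∀ (m j : ℕ) (y : sphere (0 : EuclideanSpace ℝ (Fin d)) 1),
      |A j x y| ≤ c m * (2 : ℝ) ^ (j * (d - 1)) / (1 + 2 ^ j * geodesicDist x y) ^ m) :
    ∃ C, ∀ j : ℕ,
      |(∫ y, A j x y * f y ∂(sphereMeasure d)) - f x| ≤ C * (2 : ℝ) ^ (-(j : ℝ) * t) := by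
  obtain ⟨n, rfl⟩ : ∃ n, d = n + 1 := Nat.exists_eq_succ_of_ne_zero <| by
    rintro rfl; exact ne_zero_of_mem_unit_sphere x (Subsingleton.elim _ _)
  have hc : 0 ≤ c (n + 2) := by
    simpa [geodesicDist_self] using (abs_nonneg _).trans (hloc (n + 2) 0 x)
  have hMf : 0 ≤ Mf := (abs_nonneg _).trans (hfb x)
  refine ⟨c (n + 2) * (|M| + 2 * Mf / δ ^ t) * (2 ^ (n + 1) *
    ((n + 1) * 2 ^ (n + 1) * volume.real (ball (0 : EuclideanSpace ℝ (Fin (n + 1))) 1))),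
    fun j => ?_⟩
  have hAint : Integrable (A j x) (sphereMeasure (n + 1)) :=
    .of_bound (hAm j).aestronglyMeasurable (c 0 * 2 ^ (j * n))
      (ae_of_all _ fun y => by simpa using hloc 0 j y)
  have hAfint : Integrable (fun y => A j x y * f y) (sphereMeasure (n + 1)) :=
    hAint.mul_bdd hfm.aestronglyMeasurable (ae_of_all _ hfb)
  have h2j : (2 : ℝ) ^ (-(j : ℝ) * t) = ((2 : ℝ) ^ j) ^ (-t) := by
    rw [neg_mul, ← mul_neg, Real.rpow_mul zero_le_two, Real.rpow_natCast]
  rw [integral_mul_sub_eq_of_integral_eq_one hAint hAfint (hA1 j), h2j]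
  exact abs_integral_mul_le_of_localized (geodesicDist_nonneg x) (by positivity) ht.le ht1 hc
    (by positivity) (by positivity) (fun y => by simpa [pow_mul] using hloc (n + 2) j y)
    (fun y => abs_sub_le_mul_rpow_of_locally_holder ht.le hδ hfb (geodesicDist_nonneg x y)
      (hHolder y))
    (lintegral_sphereMeasure_div_one_add_geodesicDist_le x (by positivity))

/-- Local bias bound for localized kernels: if `f` is locally `t`-Hölder at `x`
(`0 < t ≤ 1`), bounded, and `A_j` is a localized kernel with `∫ A_j(x,y) dy = 1` and
`|A_j(x,y)| ≤ c_m 2^{j(d-1)}/(1+2^j d(x,y))^m` for every `m`, then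
`|∫ A_j(x,y) f(y) dy − f(x)| ≤ C 2^{-jt}` for all `j`. -/
theorem local_bias_bound (d : ℕ) (hd : 2 ≤ d) (t M δ Mf : ℝ)
    (ht : 0 < t) (ht1 : t ≤ 1) (hδ : 0 < δ)
    (x : sphere (0 : EuclideanSpace ℝ (Fin d)) 1)
    (f : sphere (0 : EuclideanSpace ℝ (Fin d)) 1 → ℝ)
    (hfm : Measurable f) (hfb : ∀ y, |f y| ≤ Mf)
    (hHolder : ∀ y, geodesicDist x y ≤ δ → |f y - f x| ≤ M * geodesicDist x y ^ t)
    (A : ℕ → sphere (0 : EuclideanSpace ℝ (Fin d)) 1 →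
          sphere (0 : EuclideanSpace ℝ (Fin d)) 1 → ℝ)
    (hAm : ∀ j, Measurable (A j x))
    (hA1 : ∀ j, ∫ y, A j x y ∂(sphereMeasure d) = 1)
    (c : ℕ → ℝ)
    (hloc : ∀ (m j : ℕ) (y : sphere (0 : EuclideanSpace ℝ (Fin d)) 1),
      |A j x y| ≤ c m * (2 : ℝ) ^ (j * (d - 1)) / (1 + 2 ^ j * geodesicDist x y) ^ m) :
    ∃ C, ∀ j : ℕ,
      |(∫ y, A j x y * f y ∂(sphereMeasure d)) - f x| ≤ C * (2 : ℝ) ^ (-(j : ℝ) * t) :=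
  local_bias_bound_general d t M δ Mf ht ht1 hδ x f hfm hfb hHolder A hAm hA1 c hloc
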